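/- Let S, z : Finset ℂ with (↑z : Set ℂ) ∩ (↑S : Set ℂ) = ∅, let C be the subtype {w : ℂ // w ∉ S} with the subspace topology, and let X := (ℝ × ℝ) × C. Let G be a topological group which is simply connected (SimplyConnectedSpace G). Then for every continuous map g : C(X, G) such that g (p, c) = 1 for every p ∈ ℝ × ℝ and every c : C with (c : ℂ) ∈ z, there exists a homotopy relative to the set (Set.univ : Set (ℝ × ℝ)) ×ˢ {c : C | (c : ℂ) ∈ z} between g and the constant map with value 1. -/

import Mathlib

/-!
Contracting the factor `ℝ × ℝ` is stationary on the defect, because `g` is `1` there, so it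
suffices to treat the slice `f = g (0, ·)` on `C = ℂ ∖ S`, relative to the finite set `Z` of
defect points. Freely, `f` is null-homotopic: pushing the punctured `ε`-discs around `S`
radially onto their boundary circles deforms `C` into the complement of the open discs, and since
`G` is simply connected the restriction of `f` to each circle bounds a disc (the cone on a path
homotopy to the constant loop), so `f` factors up to homotopy through the contractible plane `ℂ`.
A free homotopy `E` from `f` to `1` is then made stationary at a point `x ∈ Z` by multiplying it
with the inverse of a null-homotopy of the loop `t ↦ E (t, x)`, switched off near the points
already treated by an Urysohn function.
-/

open Set Metric unitInterval ContinuousMap Topology Real Filter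

theorem Finset.exists_pos_pairwise_two_mul_lt_dist {X : Type*} [MetricSpace X] (S : Finset X) :
    ∃ ε > 0, (S : Set X).Pairwise fun s t => 2 * ε < dist s t := by
  have hsmall : ∀ᶠ ε in 𝓝[>] (0 : ℝ), 0 < ε ∧ ∀ p ∈ S.offDiag, 2 * ε < dist p.1 p.2 := by
    refine eventually_mem_nhdsWithin.and ((Finset.eventually_all _).2 fun p hp => ?_)
    have hlim : Tendsto (fun ε : ℝ => 2 * ε) (𝓝[>] 0) (𝓝 0) := by
      simpa using ((continuous_const_mul (2 : ℝ)).tendsto 0).mono_left nhdsWithin_le_nhds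
    exact hlim.eventually (gt_mem_nhds (dist_pos.2 (Finset.mem_offDiag.1 hp).2.2))
  obtain ⟨ε, hε, hS⟩ := hsmall.exists
  exact ⟨ε, hε, fun s hs t ht hst => hS (s, t) (Finset.mem_offDiag.2 ⟨hs, ht, hst⟩)⟩

section RadialPush

variable {S : Finset ℂ} {ε : ℝ}

/-- At time `t = 1` this pushes every point of `ball s ε \ {s}`, `s ∈ S`, radially onto
`sphere s ε`; when the balls are disjoint at most one summand is nonzero. -/
noncomputable def radialPush (S : Finset ℂ) (ε t : ℝ) (w : ℂ) : ℂ :=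
  w + ∑ s ∈ S, (t * max 0 (ε / dist w s - 1)) • (w - s)

lemma radialPush_zero (w : ℂ) : radialPush S ε 0 w = w := by simp [radialPush]

lemma radialPush_of_mem_compl {w : ℂ} (hw : w ∈ (⋃ s ∈ S, ball s ε)ᶜ) (t : ℝ) :
    radialPush S ε t w = w := by
  refine add_eq_left.2 (Finset.sum_eq_zero fun s hs => ?_)
  have hsw : ε ≤ dist w s := not_lt.1 fun h => hw (mem_biUnion hs h)
  rw [max_eq_left (sub_nonpos.2 (div_le_one_of_le₀ hsw dist_nonneg)), mul_zero, zero_smul]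

variable (hS : (S : Set ℂ).Pairwise fun s t => 2 * ε < dist s t)
include hS

lemma lt_dist_of_dist_le {s s' w : ℂ} (hs : s ∈ S) (hs' : s' ∈ S) (hne : s ≠ s')
    (hw : dist w s ≤ ε) : ε < dist w s' := by
  have := hS hs hs' hne
  have := dist_triangle_left s s' w
  linarith

lemma notMem_of_pos_of_dist_le {s w : ℂ} (hs : s ∈ S) (hpos : 0 < dist w s)
    (hw : dist w s ≤ ε) : w ∉ S := fun hwS =>
  (lt_dist_of_dist_le hS hs hwS (fun h => hpos.ne' (h ▸ dist_self w)) hw).not_ge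
    (by rw [dist_self]; linarith)

lemma mem_compl_iUnion_ball_of_dist_eq {s w : ℂ} (hs : s ∈ S) (hw : dist w s = ε) :
    w ∈ (⋃ s ∈ S, ball s ε)ᶜ := by
  simp only [mem_compl_iff, mem_iUnion, mem_ball, not_exists, not_lt]
  intro s' hs'
  rcases eq_or_ne s s' with rfl | hne
  · exact hw.ge
  · exact (lt_dist_of_dist_le hS hs hs' hne hw.le).le

lemma dist_radialPush_of_mem_ball {s w : ℂ} (hs : s ∈ S) (hw : w ∈ ball s ε) (hws : w ≠ s)
    {t : ℝ} (ht : 0 ≤ t) :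
    dist (radialPush S ε t w) s = dist w s + t * (ε - dist w s) := by
  have hd : 0 < dist w s := dist_pos.2 hws
  have hpush : radialPush S ε t w = w + (t * (ε / dist w s - 1)) • (w - s) := by
    rw [radialPush, Finset.sum_eq_single_of_mem s hs, max_eq_right]
    · rw [sub_nonneg, one_le_div₀ hd]; exact (mem_ball.1 hw).le
    · intro s' hs' hne
      have := lt_dist_of_dist_le hS hs hs' hne.symm (mem_ball.1 hw).le
      rw [max_eq_left (sub_nonpos.2 (div_le_one_of_le₀ this.le dist_nonneg)), mul_zero, zero_smul]
  have hcoef : 0 ≤ 1 + t * (ε / dist w s - 1) := by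
    have : 1 ≤ ε / dist w s := (one_le_div₀ hd).2 (mem_ball.1 hw).le
    nlinarith
  rw [hpush, dist_eq_norm, show w + (t * (ε / dist w s - 1)) • (w - s) - s
    = (1 + t * (ε / dist w s - 1)) • (w - s) by module, norm_smul, Real.norm_of_nonneg hcoef,
    ← dist_eq_norm]
  field_simp

lemma radialPush_notMem {w : ℂ} (hw : w ∉ S) {t : ℝ} (ht : t ∈ Icc (0 : ℝ) 1) :
    radialPush S ε t w ∉ S := by
  by_cases hΩ : w ∈ (⋃ s ∈ S, ball s ε)ᶜ
  · rwa [radialPush_of_mem_compl hΩ]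
  obtain ⟨s, hs, hws⟩ : ∃ s ∈ S, w ∈ ball s ε := by simpa using hΩ
  have hne : w ≠ s := fun h => hw (h ▸ hs)
  have hd := dist_pos.2 hne
  have hwε := mem_ball.1 hws
  refine notMem_of_pos_of_dist_le hS hs ?_ ?_ <;>
    rw [dist_radialPush_of_mem_ball hS hs hws hne ht.1] <;> nlinarith [ht.1, ht.2]

lemma radialPush_one_mem_compl {w : ℂ} (hw : w ∉ S) :
    radialPush S ε 1 w ∈ (⋃ s ∈ S, ball s ε)ᶜ := by
  by_cases hΩ : w ∈ (⋃ s ∈ S, ball s ε)ᶜ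
  · rwa [radialPush_of_mem_compl hΩ]
  obtain ⟨s, hs, hws⟩ : ∃ s ∈ S, w ∈ ball s ε := by simpa using hΩ
  refine mem_compl_iUnion_ball_of_dist_eq hS hs ?_
  rw [dist_radialPush_of_mem_ball hS hs hws (fun h => hw (h ▸ hs)) zero_le_one]
  ring

omit hS in
lemma continuous_radialPush :
    Continuous fun q : I × {w : ℂ // w ∉ S} => radialPush S ε q.1 q.2 := by
  refine continuous_snd.subtype_val.add (continuous_finsetSum _ fun s hs => ?_)
  have hdist : ∀ q : I × {w : ℂ // w ∉ S}, dist (q.2 : ℂ) s ≠ 0 := fun q =>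
    dist_ne_zero.2 fun h => q.2.2 (h ▸ hs)
  have hdiv := continuous_const.div (by fun_prop) hdist (f := fun _ => ε)
  fun_prop

theorem exists_homotopic_id_forall_mem_compl_iUnion_ball :
    ∃ r : C({w : ℂ // w ∉ S}, {w : ℂ // w ∉ S}),
      (ContinuousMap.id _).Homotopic r ∧ ∀ w, (r w : ℂ) ∈ (⋃ s ∈ S, ball s ε)ᶜ := by
  let H : C(I × {w : ℂ // w ∉ S}, {w : ℂ // w ∉ S}) :=
    ⟨fun q => ⟨radialPush S ε q.1 q.2, radialPush_notMem hS q.2.2 q.1.2⟩,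
      continuous_radialPush.subtype_mk _⟩
  refine ⟨H.curry 1, ⟨⟨H, fun w => Subtype.ext (radialPush_zero _), fun _ => rfl⟩⟩,
    fun w => radialPush_one_mem_compl hS w.2⟩

end RadialPush

section

variable {Y : Type*} [TopologicalSpace Y]

lemma dist_circleMap_center (s : ℂ) (R θ : ℝ) : dist (circleMap s R θ) s = |R| := by
  rw [dist_eq_norm, circleMap_sub_center, norm_circleMap_zero]

/-- Polar coordinates with radius `ε * (1 - r)`: the boundary circle is `r = 0` and the centre
`r = 1`, as for the source and target of a path homotopy to a constant loop. -/
noncomputable def closedBallPolar (s : ℂ) {ε : ℝ} (hε : 0 ≤ ε) : C(I × I, closedBall s ε) where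
  toFun q := ⟨circleMap s (ε * σ q.1) (2 * π * q.2), by
    rw [mem_closedBall, dist_circleMap_center, abs_of_nonneg (by have := (σ q.1).2.1; positivity)]
    exact mul_le_of_le_one_right hε (σ q.1).2.2⟩
  continuous_toFun := by
    refine Continuous.subtype_mk ?_ _
    simp only [circleMap]
    fun_prop

lemma closedBallPolar_surjective (s : ℂ) {ε : ℝ} (hε : 0 < ε) :
    Function.Surjective (closedBallPolar s hε.le) := by
  rintro ⟨w, hw⟩
  have hr : 1 - dist w s / ε ∈ I := by
    rw [mem_closedBall] at hw
    constructor
    · rw [sub_nonneg, div_le_one hε]; exact hw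
    · have : 0 ≤ dist w s / ε := by positivity
      linarith
  refine ⟨(⟨_, hr⟩, ⟨Int.fract (Complex.arg (w - s) / (2 * π)), Int.fract_nonneg _,
    (Int.fract_lt_one _).le⟩), Subtype.ext ?_⟩
  have hrad : ε * (1 - (1 - dist w s / ε)) = ‖w - s‖ := by
    rw [← dist_eq_norm]; field_simp; ring
  simp only [closedBallPolar, ContinuousMap.coe_mk, coe_symm_eq, hrad]
  rw [Int.fract, mul_sub, mul_div_cancel₀ _ (by positivity), mul_comm (2 * π),
    (periodic_circleMap s _).sub_int_mul_eq, circleMap, Complex.norm_mul_exp_arg_mul_I]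
  ring

lemma dist_closedBallPolar (s : ℂ) {ε : ℝ} (hε : 0 ≤ ε) (q : I × I) :
    dist (closedBallPolar s hε q : ℂ) s = ε * σ q.1 := by
  rw [closedBallPolar, ContinuousMap.coe_mk, dist_circleMap_center,
    abs_of_nonneg (by have := (σ q.1).2.1; positivity)]

lemma unitInterval.eq_or_endpoints_of_coe_eq_add_int {θ θ' : I} {n : ℤ} (h : (θ : ℝ) = θ' + n) :
    θ = θ' ∨ (θ = 0 ∧ θ' = 1) ∨ (θ = 1 ∧ θ' = 0) := by
  obtain ⟨⟨h0, h1⟩, ⟨h0', h1'⟩⟩ := And.intro θ.2 θ'.2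
  rcases lt_trichotomy n 0 with hn | rfl | hn
  · have : (n : ℝ) ≤ -1 := by exact_mod_cast Int.le_sub_one_of_lt hn
    exact Or.inr (Or.inl ⟨Set.Icc.coe_eq_zero.1 (by linarith), Set.Icc.coe_eq_one.1 (by linarith)⟩)
  · exact Or.inl (Subtype.ext (by simpa using h))
  · have : (1 : ℝ) ≤ n := by exact_mod_cast hn
    exact Or.inr (Or.inr ⟨Set.Icc.coe_eq_one.1 (by linarith), Set.Icc.coe_eq_zero.1 (by linarith)⟩)

lemma factorsThrough_closedBallPolar (s : ℂ) {ε : ℝ} (hε : 0 < ε) (A : C(I × I, Y))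
    (hcenter : ∀ θ θ', A (1, θ) = A (1, θ')) (hseam : ∀ r, A (r, 0) = A (r, 1)) :
    Function.FactorsThrough A (closedBallPolar s hε.le) := by
  rintro ⟨r, θ⟩ ⟨r', θ'⟩ hq
  obtain rfl : r = r' := by
    have := congrArg (fun w : closedBall s ε => dist (w : ℂ) s) hq
    simp only [dist_closedBallPolar, mul_eq_mul_left_iff, hε.ne', or_false] at this
    exact symm_inj.1 (Subtype.ext this)
  by_cases hr : r = 1
  · subst hr; exact hcenter θ θ'
  have hR : ε * σ r ≠ 0 := mul_ne_zero hε.ne' (coe_ne_zero.2 fun h => hr (symm_eq_zero.1 h))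
  obtain ⟨n, hn⟩ := (circleMap_eq_circleMap_iff s hR).1 (congrArg Subtype.val hq)
  have hθ : (θ : ℝ) = θ' + n := by
    simp only [show (n : ℂ) * (2 * π * Complex.I) = ↑(n * (2 * π)) * Complex.I by push_cast; ring,
      ← add_mul, mul_eq_mul_right_iff, Complex.I_ne_zero, or_false, ← Complex.ofReal_add,
      Complex.ofReal_inj] at hn
    exact mul_left_cancel₀ (by positivity : 2 * π ≠ 0) (by linarith)
  rcases eq_or_endpoints_of_coe_eq_add_int hθ with rfl | ⟨rfl, rfl⟩ | ⟨rfl, rfl⟩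
  · rfl
  · exact hseam r
  · exact (hseam r).symm

theorem exists_continuousOn_closedBall_eqOn_sphere [SimplyConnectedSpace Y] (s : ℂ) {ε : ℝ}
    (hε : 0 < ε) {u : ℂ → Y} (hu : ContinuousOn u (sphere s ε)) :
    ∃ F : ℂ → Y, ContinuousOn F (closedBall s ε) ∧ EqOn F u (sphere s ε) := by
  classical
  set Φ := closedBallPolar s hε.le
  have hΦ : IsQuotientMap Φ :=
    Φ.continuous.isClosedMap.isQuotientMap Φ.continuous (closedBallPolar_surjective s hε)
  have hΦ_sphere : ∀ θ : I, (Φ (0, θ) : ℂ) ∈ sphere s ε := fun θ => by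
    rw [mem_sphere, dist_closedBallPolar, symm_zero, Set.Icc.coe_one, mul_one]
  let γ : Path (u (Φ (0, 0))) (u (Φ (0, 0))) :=
    { toFun := fun θ => u (Φ (0, θ))
      continuous_toFun := hu.comp_continuous (by fun_prop) hΦ_sphere
      source' := rfl
      target' := by
        simp only [Φ, closedBallPolar, ContinuousMap.coe_mk, Set.Icc.coe_one, mul_one]
        rw [(periodic_circleMap s _).eq, ← mul_zero (2 * π)]
        rfl }
  obtain ⟨A⟩ := SimplyConnectedSpace.paths_homotopic γ (Path.refl _)
  have hfac := factorsThrough_closedBallPolar s hε A.toContinuousMap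
    (fun θ θ' => (A.apply_one θ).trans (A.apply_one θ').symm)
    (fun r => (A.source r).trans (A.target r).symm)
  refine ⟨fun w => if hw : w ∈ closedBall s ε then hΦ.lift _ hfac ⟨w, hw⟩ else u w, ?_, ?_⟩
  · rw [continuousOn_iff_continuous_domRestrict]
    convert (hΦ.lift _ hfac).continuous using 1
    funext w
    exact dif_pos w.2
  · intro w hw
    obtain ⟨⟨r, θ⟩, hq⟩ : ∃ q, Φ q = ⟨w, sphere_subset_closedBall hw⟩ :=
      closedBallPolar_surjective s hε _
    obtain rfl : r = 0 := by
      have := dist_closedBallPolar s hε.le (r, θ)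
      rw [hq, mem_sphere.1 hw, left_eq_mul₀ hε.ne'] at this
      exact symm_eq_one.1 (Set.Icc.coe_eq_one.1 this)
    calc _ = hΦ.lift _ hfac (Φ (0, θ)) := by simp only [dif_pos (sphere_subset_closedBall hw), hq]
      _ = γ θ := (DFunLike.congr_fun (hΦ.lift_comp _ hfac) (0, θ)).trans (A.apply_zero θ)
      _ = u w := congrArg (fun v : closedBall s ε => u v) hq

theorem exists_continuousOn_union_closedBall_eqOn [SimplyConnectedSpace Y] {K : Set ℂ}
    (hK : IsClosed K) {s : ℂ} {ε : ℝ} (hε : 0 < ε) (hsK : sphere s ε ⊆ K)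
    (hKs : Disjoint K (ball s ε)) {u : ℂ → Y} (hu : ContinuousOn u K) :
    ∃ v : ℂ → Y, ContinuousOn v (K ∪ closedBall s ε) ∧ EqOn v u K := by
  classical
  obtain ⟨F, hF, hFu⟩ := exists_continuousOn_closedBall_eqOn_sphere s hε (hu.mono hsK)
  have hvu : EqOn ((closedBall s ε).piecewise F u) u K := fun w hw => by
    by_cases hwb : w ∈ closedBall s ε
    · rw [piecewise_eq_of_mem _ _ _ hwb]
      exact hFu (mem_sphere.2 ((mem_closedBall.1 hwb).antisymm
        (not_lt.1 fun h => hKs.notMem_of_mem_left hw (mem_ball.2 h))))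
    · exact piecewise_eq_of_notMem _ _ _ hwb
  refine ⟨(closedBall s ε).piecewise F u, ?_, hvu⟩
  exact (hu.congr hvu).union_of_isClosed (hF.congr fun w hw => piecewise_eq_of_mem _ _ _ hw)
    hK isClosed_closedBall

theorem exists_continuous_eqOn_compl_iUnion_ball [SimplyConnectedSpace Y] {S : Finset ℂ}
    {ε : ℝ} (hε : 0 < ε) (hS : (S : Set ℂ).Pairwise fun s t => 2 * ε < dist s t) {u : ℂ → Y}
    (hu : ContinuousOn u (⋃ s ∈ S, ball s ε)ᶜ) :
    ∃ F : C(ℂ, Y), EqOn F u (⋃ s ∈ S, ball s ε)ᶜ := by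
  set Ω := (⋃ s ∈ S, ball s ε)ᶜ
  suffices ∀ T ⊆ S, ∃ v : ℂ → Y, ContinuousOn v (Ω ∪ ⋃ t ∈ T, closedBall t ε) ∧ EqOn v u Ω by
    obtain ⟨v, hv, hvu⟩ := this S subset_rfl
    have hcover : Ω ∪ ⋃ t ∈ S, closedBall t ε = univ := by
      refine eq_univ_of_forall fun w => ?_
      by_cases hw : w ∈ Ω
      · exact Or.inl hw
      · obtain ⟨s, hs, hws⟩ : ∃ s ∈ S, w ∈ ball s ε := by simpa [Ω] using hw
        exact Or.inr (mem_biUnion hs (ball_subset_closedBall hws))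
    rw [hcover] at hv
    exact ⟨⟨v, continuousOn_univ.1 hv⟩, hvu⟩
  intro T
  induction T using Finset.induction_on with
  | empty => exact fun _ => ⟨u, by simpa using hu, fun _ _ => rfl⟩
  | insert s T hsT ih =>
    intro hTS
    obtain ⟨v, hv, hvu⟩ := ih ((Finset.subset_insert s T).trans hTS)
    have hs : s ∈ S := hTS (Finset.mem_insert_self s T)
    have hK : IsClosed (Ω ∪ ⋃ t ∈ T, closedBall t ε) :=
      (isOpen_biUnion fun _ _ => isOpen_ball).isClosed_compl.union
        (T.finite_toSet.isClosed_biUnion fun _ _ => isClosed_closedBall)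
    have hsK : sphere s ε ⊆ Ω ∪ ⋃ t ∈ T, closedBall t ε := fun w hw =>
      Or.inl (mem_compl_iUnion_ball_of_dist_eq hS hs (mem_sphere.1 hw))
    have hKs : Disjoint (Ω ∪ ⋃ t ∈ T, closedBall t ε) (ball s ε) := by
      refine disjoint_union_left.2 ⟨disjoint_compl_left.mono_right
        (subset_biUnion_of_mem (u := fun s => ball s ε) hs), ?_⟩
      refine disjoint_iUnion₂_left.2 fun t ht => closedBall_disjoint_ball ?_
      have hne : t ≠ s := fun h => hsT (h ▸ ht)
      linarith [hS (hTS (Finset.mem_insert_of_mem ht)) hs hne]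
    obtain ⟨v', hv', hv'v⟩ := exists_continuousOn_union_closedBall_eqOn hK hε hsK hKs hv
    refine ⟨v', ?_, fun w hw => (hv'v (Or.inl hw)).trans (hvu hw)⟩
    rwa [Finset.set_biUnion_insert, union_left_comm, union_comm (closedBall s ε)]

theorem ContinuousMap.Nullhomotopic.homotopic_const {X : Type*} [TopologicalSpace X]
    [PathConnectedSpace Y] {f : C(X, Y)} (hf : f.Nullhomotopic) (y : Y) :
    f.Homotopic (const X y) :=
  let ⟨y₀, h⟩ := hf
  h.trans ⟨(PathConnectedSpace.somePath y₀ y).toHomotopyConst⟩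

theorem SimplyConnectedSpace.homotopic_const_of_punctured_plane [SimplyConnectedSpace Y]
    (S : Finset ℂ) (f : C({w : ℂ // w ∉ S}, Y)) (y : Y) : f.Homotopic (const _ y) := by
  classical
  obtain ⟨ε, hε, hS⟩ := S.exists_pos_pairwise_two_mul_lt_dist
  obtain ⟨r, hr, hrΩ⟩ := exists_homotopic_id_forall_mem_compl_iUnion_ball hS
  let u : ℂ → Y := fun w => if hw : w ∈ S then y else f ⟨w, hw⟩
  have hΩS : ∀ w ∈ (⋃ s ∈ S, ball s ε)ᶜ, w ∉ S := fun w hw hwS =>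
    hw (mem_biUnion hwS (mem_ball_self hε))
  have hu : ContinuousOn u (⋃ s ∈ S, ball s ε)ᶜ := by
    rw [continuousOn_iff_continuous_domRestrict]
    convert f.continuous.comp ((continuous_subtype_val).subtype_mk fun w => hΩS w w.2) using 1
    funext w
    exact dif_neg (hΩS w w.2)
  obtain ⟨F, hF⟩ := exists_continuous_eqOn_compl_iUnion_ball hε hS hu
  let r' : C({w : ℂ // w ∉ S}, ℂ) := ⟨fun w => r w, by fun_prop⟩
  have hfr : f.comp r = F.comp r' := by
    ext w
    exact ((hF (hrΩ w)).trans (dif_neg (r w).2)).symm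
  have hF : (F.comp r').Nullhomotopic := by
    simpa using ((id_nullhomotopic ℂ).comp_right F).comp_left r'
  simpa using ((Homotopic.refl f).comp hr).trans (hfr ▸ hF.homotopic_const y)

namespace ContinuousMap

variable {X Z : Type*} [TopologicalSpace X] [TopologicalSpace Z]

theorem HomotopicRel.precomp {f₀ f₁ : C(Y, Z)} {S : Set Y} (h : f₀.HomotopicRel f₁ S)
    (g : C(X, Y)) : (f₀.comp g).HomotopicRel (f₁.comp g) (g ⁻¹' S) :=
  let ⟨F⟩ := h
  ⟨{ toHomotopy := F.toHomotopy.compContinuousMap g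
     prop' := fun t _ hx => F.eq_fst t hx }⟩

theorem homotopicRel_curry_comp_snd {P : Type*} [TopologicalSpace P] [ContractibleSpace P]
    (g : C(P × X, Y)) {K : Set X} (hK : ∀ x ∈ K, ∀ p p', g (p, x) = g (p', x)) (p₀ : P) :
    g.HomotopicRel ((g.curry p₀).comp .snd) (univ ×ˢ K) := by
  obtain ⟨H⟩ := (id_nullhomotopic P).homotopic_const p₀
  exact ⟨{ toFun := fun q => g (H (q.1, q.2.1), q.2.2)
           continuous_toFun := by fun_prop
           map_zero_left := fun _ => by simp
           map_one_left := fun _ => by simp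
           prop' := fun t x hx => hK x.2 hx.2 _ _ }⟩

variable {G : Type*} [TopologicalSpace G] [Group G] [IsTopologicalGroup G]
  [SimplyConnectedSpace G]

theorem HomotopicRel.insert {f₀ f₁ : C(X, G)} {S : Set X} (h : f₀.HomotopicRel f₁ S) {x : X}
    (hx : f₀ x = f₁ x) (ρ : C(X, I)) (hρx : ρ x = 0) (hρS : EqOn ρ 1 S) :
    f₀.HomotopicRel f₁ (insert x S) := by
  obtain ⟨E⟩ := h
  let τ : Path (f₀ x) (f₀ x) :=
    { toFun := fun t => E (t, x)
      source' := E.apply_zero x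
      target' := (E.apply_one x).trans hx.symm }
  obtain ⟨A⟩ := SimplyConnectedSpace.paths_homotopic τ (Path.refl _)
  refine ⟨{ toFun := fun q => E q * (A (ρ q.2, q.1))⁻¹ * f₀ x
            continuous_toFun := by fun_prop
            map_zero_left := fun _ => by simp [A.source]
            map_one_left := fun _ => by simp [A.target, hx]
            prop' := fun t y hy => ?_ }⟩
  rcases hy with rfl | hy
  · simp [hρx, A.apply_zero, τ]
  · simp [hρS hy, A.apply_one, E.eq_fst t hy]

theorem Homotopic.homotopicRel_of_finite [CompletelyRegularSpace X] [T1Space X]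
    {f₀ f₁ : C(X, G)} (h : f₀.Homotopic f₁) {S : Set X} (hS : S.Finite) (hS' : EqOn f₀ f₁ S) :
    f₀.HomotopicRel f₁ S := by
  induction S, hS using Set.Finite.induction_on with
  | empty => exact homotopicRel_empty.2 h
  | @insert x S hxS hS ih =>
    obtain ⟨ρ, hρ, hρx, hρS⟩ :=
      CompletelyRegularSpace.completely_regular x S hS.isClosed hxS
    exact (ih (hS'.mono (subset_insert x S))).insert (hS' (mem_insert x S)) ⟨ρ, hρ⟩ hρx hρS

end ContinuousMap

end

theorem homotopyRel_defect_to_const_of_simplyConnected_general (S z : Finset ℂ)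
    {G : Type*} [TopologicalSpace G] [Group G] [IsTopologicalGroup G] [SimplyConnectedSpace G]
    (g : C((ℝ × ℝ) × {w : ℂ // w ∉ S}, G))
    (hg : ∀ (p : ℝ × ℝ) (c : {w : ℂ // w ∉ S}), (c : ℂ) ∈ z → g (p, c) = 1) :
    Nonempty (ContinuousMap.HomotopyRel g
      (ContinuousMap.const ((ℝ × ℝ) × {w : ℂ // w ∉ S}) 1)
      ((Set.univ : Set (ℝ × ℝ)) ×ˢ {c : {w : ℂ // w ∉ S} | (c : ℂ) ∈ z})) := by
  set Z := {c : {w : ℂ // w ∉ S} | (c : ℂ) ∈ z}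
  have hZ : Z.Finite := z.finite_toSet.preimage Subtype.val_injective.injOn
  have hslice := (SimplyConnectedSpace.homotopic_const_of_punctured_plane S (g.curry 0) 1
    |>.homotopicRel_of_finite hZ fun c hc => hg 0 c hc).precomp (ContinuousMap.snd (α := ℝ × ℝ))
  rw [const_comp, show ContinuousMap.snd ⁻¹' Z = univ ×ˢ Z from univ_prod.symm] at hslice
  exact (g.homotopicRel_curry_comp_snd (K := Z)
    (fun c hc p p' => (hg p c hc).trans (hg p' c hc).symm) 0).trans hslice

/-- Lemmas 2.6–2.8 combined: for a simply connected topological group `G`,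
`C = ℂ ∖ S` and `X = ℝ² × C`, every continuous map `X → G` sending the defect
`ℝ² × z` (with `z` disjoint from `S`) to the identity is homotopic to the constant map `1`
relative to the defect. -/
theorem homotopyRel_defect_to_const_of_simplyConnected (S z : Finset ℂ)
    (hdisj : (↑z : Set ℂ) ∩ (↑S : Set ℂ) = ∅)
    {G : Type*} [TopologicalSpace G] [Group G] [IsTopologicalGroup G] [SimplyConnectedSpace G]
    (g : C((ℝ × ℝ) × {w : ℂ // w ∉ S}, G))
    (hg : ∀ (p : ℝ × ℝ) (c : {w : ℂ // w ∉ S}), (c : ℂ) ∈ z → g (p, c) = 1) :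
    Nonempty (ContinuousMap.HomotopyRel g
      (ContinuousMap.const ((ℝ × ℝ) × {w : ℂ // w ∉ S}) 1)
      ((Set.univ : Set (ℝ × ℝ)) ×ˢ {c : {w : ℂ // w ∉ S} | (c : ℂ) ∈ z})) :=
  homotopyRel_defect_to_const_of_simplyConnected_general S z g hg
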